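/- arXiv:2011.02741 — 2 statements merged into one kernel-verified Lean document; each statement's English description precedes it below -/
import Mathlib

section
/- Let (X, G, Φ) be a dynamical system where X is a compact metric space, and let S be a finite subset of G. If (X, G, Φ) is a factor, by a factor map which almost lifts pseudo-orbits for S, of the inverse limit of an inverse system of dynamical systems satisfying the Mittag-Leffler condition whose terms are subshifts with the S-shadowing property, then Φ has the S-shadowing property. -/
open Set

universe u

/-! ### Dynamical systems: actions of a countable discrete group by homeomorphisms -/

/-- An action of a group `G` on a topological space `X`: each `act g` is a homeomorphism
(continuity of the inverse follows from `act g⁻¹`). -/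
structure DynAction (G X : Type u) [Group G] [TopologicalSpace X] where
  act : G → X → X
  continuous_act : ∀ g : G, Continuous (act g)
  act_one : ∀ x : X, act 1 x = x
  act_mul : ∀ (g g' : G) (x : X), act (g * g') x = act g (act g' x)

section Covers

variable {G X : Type u} [Group G] [TopologicalSpace X]

/-- A finite open cover of `X`. -/
def IsFOC (𝒰 : Finset (Set X)) : Prop :=
  (∀ U ∈ 𝒰, IsOpen U) ∧ ⋃₀ (𝒰 : Set (Set X)) = Set.univ

/-- A finite partition of `X` into nonempty clopen sets. -/
def IsClopenPartition (𝒰 : Finset (Set X)) : Prop :=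
  (∀ U ∈ 𝒰, IsClopen U ∧ U.Nonempty) ∧ ⋃₀ (𝒰 : Set (Set X)) = Set.univ ∧
    ∀ U ∈ 𝒰, ∀ V ∈ 𝒰, U ≠ V → U ∩ V = ∅

/-- `𝒱` refines `𝒰`: every member of `𝒱` is contained in a member of `𝒰`. -/
def Refines (𝒱 𝒰 : Finset (Set X)) : Prop :=
  ∀ V ∈ 𝒱, ∃ U ∈ 𝒰, V ⊆ U

/-- `{U g}` is a pattern of the `(S,𝒰)`-pseudo-orbit `{x g}`:
all `U g` belong to `𝒰`, and `x (s*g) ∈ U (s*g)` and `Φ_s (x g) ∈ U (s*g)`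
for all `g ∈ G`, `s ∈ S`. -/
def IsPseudoOrbitPattern (Φ : DynAction G X) (S : Set G) (𝒰 : Finset (Set X))
    (x : G → X) (U : G → Set X) : Prop :=
  (∀ g : G, U g ∈ 𝒰) ∧
    ∀ g : G, ∀ s ∈ S, x (s * g) ∈ U (s * g) ∧ Φ.act s (x g) ∈ U (s * g)

/-- `{x g}` is an `(S,𝒰)`-pseudo-orbit. -/
def IsPseudoOrbit (Φ : DynAction G X) (S : Set G) (𝒰 : Finset (Set X)) (x : G → X) : Prop :=
  ∃ U : G → Set X, IsPseudoOrbitPattern Φ S 𝒰 x U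

/-- `z` `𝒰`-shadows the family `{x g}`. -/
def Shadows (Φ : DynAction G X) (𝒰 : Finset (Set X)) (z : X) (x : G → X) : Prop :=
  ∀ g : G, ∃ U ∈ 𝒰, Φ.act g z ∈ U ∧ x g ∈ U

/-- The (topological) `S`-shadowing property. -/
def ShadowingProperty (Φ : DynAction G X) (S : Set G) : Prop :=
  ∀ 𝒰 : Finset (Set X), IsFOC 𝒰 → ∃ 𝒱 : Finset (Set X), IsFOC 𝒱 ∧
    ∀ x : G → X, IsPseudoOrbit Φ S 𝒱 x → ∃ z : X, Shadows Φ 𝒰 z x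

/-! ### Equivariant maps, factor maps, conjugacies -/

def IsEquivariant {Y : Type u} [TopologicalSpace Y]
    (ΦX : DynAction G X) (ΦY : DynAction G Y) (f : X → Y) : Prop :=
  ∀ (g : G) (x : X), f (ΦX.act g x) = ΦY.act g (f x)

/-- `f` is a factor map from `(X,G,ΦX)` onto `(Y,G,ΦY)`. -/
def IsFactorMap {Y : Type u} [TopologicalSpace Y]
    (ΦX : DynAction G X) (ΦY : DynAction G Y) (f : X → Y) : Prop :=
  Continuous f ∧ Function.Surjective f ∧ IsEquivariant ΦX ΦY f

/-- `f` is a conjugacy (bijective factor map). -/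
def IsConjugacy {Y : Type u} [TopologicalSpace Y]
    (ΦX : DynAction G X) (ΦY : DynAction G Y) (f : X → Y) : Prop :=
  Continuous f ∧ Function.Bijective f ∧ IsEquivariant ΦX ΦY f

end Covers

/-! ### Shifts, subshifts, shifts of finite type -/

/-- The shift action on `A^G`: `(σ_g x) h = x (h * g)`. -/
def shift (G A : Type u) [Group G] (g : G) (x : G → A) : G → A :=
  fun h => x (h * g)

/-- The full shift `A^G` (product topology) as a dynamical system. -/
def shiftDyn (G A : Type u) [Group G] [TopologicalSpace A] : DynAction G (G → A) where
  act := shift G A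
  continuous_act g := continuous_pi fun h => continuous_apply (h * g)
  act_one x := by funext h; simp [shift]
  act_mul g g' x := by funext h; simp [shift, mul_assoc]

/-- A subshift: a closed shift-invariant subset of the full shift `A^G`. -/
def IsSubshift {G A : Type u} [Group G] [TopologicalSpace A] (Y : Set (G → A)) : Prop :=
  IsClosed Y ∧ ∀ g : G, ∀ x ∈ Y, shift G A g x ∈ Y

/-- The cylinder set determined by the values of `P` on the finite shape `B`. -/
def cylinder {G A : Type u} (B : Finset G) (P : G → A) : Set (G → A) :=
  {y | ∀ b ∈ B, y b = P b}

/-- The language of `Y ⊆ A^G` over the finite shape `B` (a pattern is recorded by any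
function `G → A` with the prescribed values on `B`). -/
def language {G A : Type u} (B : Finset G) (Y : Set (G → A)) : Set (G → A) :=
  {P | (cylinder B P ∩ Y).Nonempty}

/-- `Y` is a shift of finite type over the finite shape `B`: it is cut out by a family of
forbidden patterns on `B`. -/
def IsSFTOver {G A : Type u} [Group G] (B : Finset G) (Y : Set (G → A)) : Prop :=
  ∃ ℱ : Set (G → A), Y = {x | ∀ g : G, ∀ P ∈ ℱ, shift G A g x ∉ cylinder B P}

/-- The shift action restricted to a subshift. -/
def subshiftDyn {G A : Type u} [Group G] [TopologicalSpace A] (Y : Set (G → A))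
    (hY : IsSubshift Y) : DynAction G ↥Y where
  act g x := ⟨shift G A g x.1, hY.2 g x.1 x.2⟩
  continuous_act g := Continuous.subtype_mk
    ((continuous_pi fun h => continuous_apply (h * g)).comp continuous_subtype_val) _
  act_one x := by apply Subtype.ext; funext h; simp [shift]
  act_mul g g' x := by apply Subtype.ext; funext h; simp [shift, mul_assoc]

/-! ### Hitting time sets and mixing-type properties -/

section Mixing

variable {G X : Type u} [Group G] [TopologicalSpace X]

/-- The hitting time set `N(U,V) = {g ≠ e : U ∩ Φ_{g⁻¹}(V) ≠ ∅}`. -/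
def hittingTimes (Φ : DynAction G X) (U V : Set X) : Set G :=
  {g : G | g ≠ 1 ∧ (U ∩ Φ.act g⁻¹ '' V).Nonempty}

/-- Topological mixing: `G \ N(U,V)` is finite for all nonempty open `U, V`. -/
def IsMixing (Φ : DynAction G X) : Prop :=
  ∀ U V : Set X, IsOpen U → IsOpen V → U.Nonempty → V.Nonempty →
    ((hittingTimes Φ U V)ᶜ : Set G).Finite

/-- Minimality: there is no nonempty proper closed invariant subset. -/
def IsMinimal (Φ : DynAction G X) : Prop :=
  ∀ K : Set X, IsClosed K → (∀ g : G, ∀ x ∈ K, Φ.act g x ∈ K) →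
    K = ∅ ∨ K = Set.univ

end Mixing

/-! ### Inverse systems of subshifts -/

/-- An inverse system of dynamical systems whose terms are subshifts over finite
(discrete) alphabets, with the shift `G`-action. -/
structure SubshiftInvSys (G : Type u) [Group G] (Λ : Type u) [Preorder Λ] where
  A : Λ → Type u
  [topoA : ∀ l, TopologicalSpace (A l)]
  [discA : ∀ l, DiscreteTopology (A l)]
  [finA : ∀ l, Finite (A l)]
  Y : ∀ l : Λ, Set (G → A l)
  subshift : ∀ l : Λ, IsSubshift (Y l)
  bond : ∀ {l m : Λ}, l ≤ m → ↥(Y m) → ↥(Y l)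
  bond_cont : ∀ {l m : Λ} (h : l ≤ m), Continuous (bond h)
  bond_refl : ∀ (l : Λ) (x : ↥(Y l)), bond (le_refl l) x = x
  bond_comp : ∀ {l m n : Λ} (h1 : l ≤ m) (h2 : m ≤ n) (x : ↥(Y n)),
    bond h1 (bond h2 x) = bond (h1.trans h2) x
  bond_equivariant : ∀ {l m : Λ} (h : l ≤ m) (g : G) (x : ↥(Y m)),
    (subshiftDyn (Y l) (subshift l)).act g (bond h x)
      = bond h ((subshiftDyn (Y m) (subshift m)).act g x)

namespace SubshiftInvSys

variable {G Λ : Type u} [Group G] [Preorder Λ]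

instance (𝒮 : SubshiftInvSys G Λ) (l : Λ) : TopologicalSpace (𝒮.A l) := 𝒮.topoA l
instance (𝒮 : SubshiftInvSys G Λ) (l : Λ) : DiscreteTopology (𝒮.A l) := 𝒮.discA l
instance (𝒮 : SubshiftInvSys G Λ) (l : Λ) : Finite (𝒮.A l) := 𝒮.finA l

/-- The `G`-action on the term `Y l` (the restricted shift). -/
def termDyn (𝒮 : SubshiftInvSys G Λ) (l : Λ) : DynAction G ↥(𝒮.Y l) :=
  subshiftDyn (𝒮.Y l) (𝒮.subshift l)

/-- The inverse limit of the system, as a subset of the product. -/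
def limitSet (𝒮 : SubshiftInvSys G Λ) : Set (∀ l : Λ, ↥(𝒮.Y l)) :=
  {x | ∀ (l m : Λ) (h : l ≤ m), 𝒮.bond h (x m) = x l}

lemma act_mem_limitSet (𝒮 : SubshiftInvSys G Λ) (g : G) (x : ∀ l : Λ, ↥(𝒮.Y l))
    (hx : x ∈ 𝒮.limitSet) : (fun l => (𝒮.termDyn l).act g (x l)) ∈ 𝒮.limitSet := by
  intro l m h
  show 𝒮.bond h ((𝒮.termDyn m).act g (x m)) = (𝒮.termDyn l).act g (x l)
  rw [show (𝒮.termDyn m).act g (x m)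
        = (subshiftDyn (𝒮.Y m) (𝒮.subshift m)).act g (x m) from rfl,
      ← 𝒮.bond_equivariant h g (x m)]
  show (𝒮.termDyn l).act g (𝒮.bond h (x m)) = _
  rw [hx l m h]

/-- The induced `G`-action `σ*` on the inverse limit. -/
def limitDyn (𝒮 : SubshiftInvSys G Λ) : DynAction G ↥𝒮.limitSet where
  act g x := ⟨fun l => (𝒮.termDyn l).act g (x.1 l), 𝒮.act_mem_limitSet g x.1 x.2⟩
  continuous_act g := Continuous.subtype_mk
    (continuous_pi fun l => ((𝒮.termDyn l).continuous_act g).comp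
      ((continuous_apply l).comp continuous_subtype_val)) _
  act_one x := by
    apply Subtype.ext; funext l
    exact (𝒮.termDyn l).act_one (x.1 l)
  act_mul g g' x := by
    apply Subtype.ext; funext l
    exact (𝒮.termDyn l).act_mul g g' (x.1 l)

/-- The Mittag-Leffler condition. -/
def ML (𝒮 : SubshiftInvSys G Λ) : Prop :=
  ∀ l : Λ, ∃ m : Λ, ∃ h : l ≤ m, ∀ (n : Λ) (h' : m ≤ n),
    Set.range (𝒮.bond (h.trans h')) = Set.range (𝒮.bond h)

end SubshiftInvSys

/-! ### Lifting pseudo-orbits along factor maps -/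

/-- `φ` lifts pseudo-orbits for `S`. -/
def LiftsPseudoOrbits {G X Y : Type u} [Group G] [TopologicalSpace X] [TopologicalSpace Y]
    (ΦX : DynAction G X) (ΦY : DynAction G Y) (φ : X → Y) (S : Set G) : Prop :=
  ∀ 𝒰X : Finset (Set X), IsFOC 𝒰X → ∃ 𝒰Y : Finset (Set Y), IsFOC 𝒰Y ∧
    ∀ y : G → Y, IsPseudoOrbit ΦY S 𝒰Y y →
      ∃ x : G → X, IsPseudoOrbit ΦX S 𝒰X x ∧ ∀ g : G, φ (x g) = y g

/-- `φ` almost lifts pseudo-orbits for `S`. -/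
def AlmostLiftsPseudoOrbits {G X Y : Type u} [Group G] [TopologicalSpace X]
    [TopologicalSpace Y] (ΦX : DynAction G X) (ΦY : DynAction G Y)
    (φ : X → Y) (S : Set G) : Prop :=
  ∀ 𝒰X : Finset (Set X), IsFOC 𝒰X → ∀ 𝒲Y : Finset (Set Y), IsFOC 𝒲Y →
    ∃ 𝒰Y : Finset (Set Y), IsFOC 𝒰Y ∧
      ∀ y : G → Y, IsPseudoOrbit ΦY S 𝒰Y y →
        ∃ x : G → X, IsPseudoOrbit ΦX S 𝒰X x ∧
          ∀ g : G, ∃ W ∈ 𝒲Y, φ (x g) ∈ W ∧ y g ∈ W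

/-!
The inverse limit already has `S`-shadowing. A finite open cover of the limit is refined by the
pull-back of a finite open cover `𝒞` of one term `Y m`, and Mittag-Leffler provides `n ≥ m` such
that every point of `Y m` coming from `Y n` is the `m`-th coordinate of a point of the limit. So if
`w ∈ Y n` shadows the `n`-th coordinates of a fine pseudo-orbit of the limit with respect to the
pull-back of `𝒞`, a point of the limit lying over the image of `w` in `Y m` shadows the
pseudo-orbit itself.

Shadowing then descends along `f`: a fine pseudo-orbit of `X` is almost lifted to a pseudo-orbit of
the limit, which is shadowed there; the image of the shadowing point shadows the original
pseudo-orbit up to two small errors, which a Lebesgue number of the given cover absorbs.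
-/

section Covers

variable {G X Y : Type u}

def IsCoverClose (𝒰 : Finset (Set X)) (a b : X) : Prop :=
  ∃ U ∈ 𝒰, a ∈ U ∧ b ∈ U

open scoped Classical in
lemma isCoverClose_image_preimage_iff {𝒰 : Finset (Set Y)} {f : X → Y} {a b : X} :
    IsCoverClose (𝒰.image (f ⁻¹' ·)) a b ↔ IsCoverClose 𝒰 (f a) (f b) := by
  simp [IsCoverClose]

variable [Group G] [TopologicalSpace X] [TopologicalSpace Y]

lemma IsFOC.isCoverClose_refl {𝒰 : Finset (Set X)} (h𝒰 : IsFOC 𝒰) (a : X) :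
    IsCoverClose 𝒰 a a := by
  obtain ⟨U, hU, haU⟩ : a ∈ ⋃₀ (𝒰 : Set (Set X)) := h𝒰.2 ▸ mem_univ a
  exact ⟨U, hU, haU, haU⟩

open scoped Classical in
lemma IsFOC.preimage {𝒰 : Finset (Set Y)} (h𝒰 : IsFOC 𝒰) {f : X → Y} (hf : Continuous f) :
    IsFOC (𝒰.image (f ⁻¹' ·)) := by
  refine ⟨?_, eq_univ_of_forall fun x => ?_⟩
  · simp only [Finset.mem_image]
    rintro _ ⟨U, hU, rfl⟩
    exact (h𝒰.1 U hU).preimage hf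
  · obtain ⟨U, hU, hxU, -⟩ := h𝒰.isCoverClose_refl (f x)
    exact ⟨f ⁻¹' U, Finset.mem_image_of_mem _ hU, hxU⟩

open scoped Classical in
lemma IsPseudoOrbit.map {ΦX : DynAction G X} {ΦY : DynAction G Y} {f : X → Y}
    (hf : IsEquivariant ΦX ΦY f) {S : Set G} {𝒰 : Finset (Set Y)} {x : G → X}
    (hx : IsPseudoOrbit ΦX S (𝒰.image (f ⁻¹' ·)) x) : IsPseudoOrbit ΦY S 𝒰 (f ∘ x) := by
  obtain ⟨U, hU𝒰, hU⟩ := hx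
  choose V hV hVU using fun g => Finset.mem_image.mp (hU𝒰 g)
  refine ⟨V, hV, fun g s hs => ?_⟩
  obtain ⟨hxsg, hsxg⟩ := hU g s hs
  rw [← hVU] at hxsg hsxg
  exact ⟨hxsg, hf s (x g) ▸ hsxg⟩

lemma shadowingProperty_of_subsingleton [Subsingleton X] (Φ : DynAction G X) (S : Set G) :
    ShadowingProperty Φ S := fun 𝒰 h𝒰 =>
  ⟨𝒰, h𝒰, fun x _ => ⟨x 1, fun g => Subsingleton.elim (x g) (Φ.act g (x 1)) ▸
    h𝒰.isCoverClose_refl (x g)⟩⟩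

end Covers

section Metric

variable {X : Type u} [MetricSpace X] [CompactSpace X]

lemma IsFOC.exists_isCoverClose_trans {𝒰 : Finset (Set X)} (h𝒰 : IsFOC 𝒰) :
    ∃ 𝒲 : Finset (Set X), IsFOC 𝒲 ∧
      ∀ a b c : X, IsCoverClose 𝒲 a b → IsCoverClose 𝒲 b c → IsCoverClose 𝒰 a c := by
  classical
  obtain ⟨δ, hδ, hleb⟩ := lebesgue_number_lemma_of_metric_sUnion isCompact_univ h𝒰.1
    (h𝒰.2.symm ▸ subset_rfl)
  obtain ⟨T, hT⟩ := isCompact_univ.elim_finite_subcover (fun c : X => Metric.ball c (δ / 4))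
    (fun _ => Metric.isOpen_ball) fun a _ => mem_iUnion.2 ⟨a, Metric.mem_ball_self (by positivity)⟩
  refine ⟨T.image (Metric.ball · (δ / 4)), ⟨?_, eq_univ_of_forall fun a => ?_⟩, ?_⟩
  · simp only [Finset.mem_image]
    rintro _ ⟨c, -, rfl⟩
    exact Metric.isOpen_ball
  · obtain ⟨c, hc, hac⟩ := mem_iUnion₂.1 (hT (mem_univ a))
    exact ⟨_, Finset.mem_image_of_mem _ hc, hac⟩
  · rintro a b c ⟨_, hW, ha, hb⟩ ⟨_, hW', hb', hc⟩
    obtain ⟨p, -, rfl⟩ := Finset.mem_image.1 hW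
    obtain ⟨q, -, rfl⟩ := Finset.mem_image.1 hW'
    obtain ⟨U, hU, hballU⟩ := hleb a (mem_univ a)
    refine ⟨U, hU, hballU (Metric.mem_ball_self hδ), hballU ?_⟩
    rw [Metric.mem_ball] at *
    linarith [dist_triangle4 c q b a, dist_triangle b p a, dist_comm q b, dist_comm p a]

variable {G Z : Type u} [Group G] [TopologicalSpace Z]

theorem ShadowingProperty.of_almostLiftsPseudoOrbits {ΦZ : DynAction G Z} {Φ : DynAction G X}
    {f : Z → X} {S : Set G} (hZ : ShadowingProperty ΦZ S) (hf : Continuous f)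
    (hequiv : IsEquivariant ΦZ Φ f) (hlift : AlmostLiftsPseudoOrbits ΦZ Φ f S) :
    ShadowingProperty Φ S := by
  classical
  intro 𝒰 h𝒰
  obtain ⟨𝒲, h𝒲, htrans⟩ := h𝒰.exists_isCoverClose_trans
  obtain ⟨𝒱Z, h𝒱Z, hshadow⟩ := hZ _ (h𝒲.preimage hf)
  obtain ⟨𝒱, h𝒱, hlift⟩ := hlift 𝒱Z h𝒱Z 𝒲 h𝒲
  refine ⟨𝒱, h𝒱, fun y hy => ?_⟩
  obtain ⟨x, hx, hxy⟩ := hlift y hy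
  obtain ⟨z, hz⟩ := hshadow x hx
  refine ⟨f z, fun g => htrans _ (f (x g)) _ ?_ (hxy g)⟩
  rw [← hequiv]
  exact isCoverClose_image_preimage_iff.1 (hz g)

end Metric

namespace SubshiftInvSys

open Filter Topology

variable {G Λ : Type u} [Group G] [Preorder Λ] (𝒮 : SubshiftInvSys G Λ)

instance compactSpace_Y (l : Λ) : CompactSpace (𝒮.Y l) :=
  isCompact_iff_compactSpace.mp (𝒮.subshift l).1.isCompact

lemma isClosed_limitSet : IsClosed 𝒮.limitSet := by
  simp only [limitSet, ofPred_forall]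
  exact isClosed_iInter fun l => isClosed_iInter fun m => isClosed_iInter fun h =>
    isClosed_eq ((𝒮.bond_cont h).comp (continuous_apply m)) (continuous_apply l)

instance : CompactSpace 𝒮.limitSet :=
  isCompact_iff_compactSpace.mp 𝒮.isClosed_limitSet.isCompact

lemma continuous_proj (l : Λ) : Continuous fun x : 𝒮.limitSet => x.1 l :=
  (continuous_apply l).comp continuous_subtype_val

lemma isEquivariant_proj (l : Λ) :
    IsEquivariant 𝒮.limitDyn (𝒮.termDyn l) fun x : 𝒮.limitSet => x.1 l :=
  fun _ _ => rfl

lemma bond_act {l m : Λ} (h : l ≤ m) (g : G) (y : 𝒮.Y m) :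
    𝒮.bond h ((𝒮.termDyn m).act g y) = (𝒮.termDyn l).act g (𝒮.bond h y) :=
  (𝒮.bond_equivariant h g y).symm

lemma nhds_limitSet (z : 𝒮.limitSet) :
    𝓝 z = ⨅ l, comap (fun x : 𝒮.limitSet => x.1 l) (𝓝 (z.1 l)) := by
  simp only [nhds_subtype, nhds_pi, Filter.pi, comap_iInf, comap_comap]
  rfl

lemma comap_proj_nhds_antitone {z : 𝒮.limitSet} {l m : Λ} (h : l ≤ m) :
    comap (fun x : 𝒮.limitSet => x.1 m) (𝓝 (z.1 m))
      ≤ comap (fun x : 𝒮.limitSet => x.1 l) (𝓝 (z.1 l)) := by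
  have hproj : (fun x : 𝒮.limitSet => x.1 l) = 𝒮.bond h ∘ fun x : 𝒮.limitSet => x.1 m :=
    funext fun x => (x.2 l m h).symm
  rw [hproj, ← comap_comap, ← z.2 l m h]
  exact comap_mono ((𝒮.bond_cont h).tendsto _).le_comap

lemma exists_eventually_proj_preimage_eq [IsDirected Λ (· ≤ ·)] [Nonempty Λ]
    {z : 𝒮.limitSet} {U : Set 𝒮.limitSet} (hU : U ∈ 𝓝 z) :
    ∃ W ⊆ U, z ∈ W ∧ IsOpen W ∧
      ∀ᶠ m in atTop, ∃ O : Set (𝒮.Y m), IsOpen O ∧ (fun x : 𝒮.limitSet => x.1 m) ⁻¹' O = W := by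
  rw [nhds_limitSet, mem_iInf_of_directed
    (directed_of_isDirected_le fun _ _ h => 𝒮.comap_proj_nhds_antitone h)] at hU
  obtain ⟨l, t, ht, htU⟩ := hU
  obtain ⟨O, hOt, hO, hzO⟩ := mem_nhds_iff.1 ht
  refine ⟨_, (preimage_mono hOt).trans htU, hzO, hO.preimage (𝒮.continuous_proj l),
    eventually_atTop.2 ⟨l, fun m hlm => ⟨𝒮.bond hlm ⁻¹' O, hO.preimage (𝒮.bond_cont hlm), ?_⟩⟩⟩
  ext x
  simp only [mem_preimage, x.2 l m hlm]

lemma exists_isFOC_proj_refines [IsDirected Λ (· ≤ ·)] [Nonempty Λ]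
    {𝒰 : Finset (Set 𝒮.limitSet)} (h𝒰 : IsFOC 𝒰) :
    ∃ (m : Λ) (𝒞 : Finset (Set (𝒮.Y m))), IsFOC 𝒞 ∧
      ∀ x y : 𝒮.limitSet, IsCoverClose 𝒞 (x.1 m) (y.1 m) → IsCoverClose 𝒰 x y := by
  classical
  choose U hU hzU using h𝒰.isCoverClose_refl
  choose W hWU hzW hW hev using fun z =>
    𝒮.exists_eventually_proj_preimage_eq ((h𝒰.1 _ (hU z)).mem_nhds (hzU z).1)
  obtain ⟨t, ht⟩ := isCompact_univ.elim_finite_subcover W hW fun z _ => mem_iUnion.2 ⟨z, hzW z⟩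
  obtain ⟨m, hm⟩ := ((eventually_all_finset t).2 fun z _ => hev z).exists
  choose! O hO hOW using hm
  -- the complement of the (closed) image of the limit completes the cover and meets no projection
  have hrange : IsClosed (range fun x : 𝒮.limitSet => x.1 m) :=
    (isCompact_range (𝒮.continuous_proj m)).isClosed
  refine ⟨m, insert (range fun x : 𝒮.limitSet => x.1 m)ᶜ (t.image O), ⟨?_, ?_⟩, ?_⟩
  · simp only [Finset.mem_insert, Finset.mem_image]
    rintro _ (rfl | ⟨z, hz, rfl⟩)
    exacts [hrange.isOpen_compl, hO z hz]
  · refine eq_univ_of_forall fun y => ?_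
    by_cases hy : y ∈ range fun x : 𝒮.limitSet => x.1 m
    · obtain ⟨x, rfl⟩ := hy
      obtain ⟨z, hz, hxz⟩ := mem_iUnion₂.1 (ht (mem_univ x))
      refine ⟨O z, Finset.mem_insert_of_mem (Finset.mem_image_of_mem O hz), ?_⟩
      rwa [← hOW z hz] at hxz
    · exact ⟨_, Finset.mem_insert_self _ _, hy⟩
  · rintro x y ⟨C, hC, hxC, hyC⟩
    obtain rfl | ⟨z, hz, rfl⟩ := Finset.mem_insert.1 hC |>.imp_right Finset.mem_image.1
    · exact absurd ⟨x, rfl⟩ hxC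
    · have hxW : x ∈ W z := by rw [← hOW z hz]; exact hxC
      have hyW : y ∈ W z := by rw [← hOW z hz]; exact hyC
      exact ⟨U z, hU z, hWU z hxW, hWU z hyW⟩

lemma mem_range_proj_of_forall_mem_range_bond [IsDirected Λ (· ≤ ·)] {m : Λ} {p : 𝒮.Y m}
    (hp : ∀ γ (h : m ≤ γ), p ∈ range (𝒮.bond h)) :
    p ∈ range fun x : 𝒮.limitSet => x.1 m := by
  classical
  have hne : ∀ l, Nonempty (𝒮.Y l) := fun l => by
    obtain ⟨δ, hlδ, hmδ⟩ := directed_of (· ≤ ·) l m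
    exact ⟨𝒮.bond hlδ (hp δ hmδ).choose⟩
  -- threads through `p` that are consistent below `γ`; they form a nested family of nonempty compacta
  let D : Λ → Set (∀ l, 𝒮.Y l) := fun γ =>
    {x | x m = p ∧ ∀ l (h : l ≤ γ), 𝒮.bond h (x γ) = x l}
  have hD_closed : ∀ γ, IsClosed (D γ) := fun γ => by
    simp only [D, ofPred_and, ofPred_forall]
    exact (isClosed_eq (continuous_apply m) continuous_const).inter <|
      isClosed_iInter fun l => isClosed_iInter fun h =>
        isClosed_eq ((𝒮.bond_cont h).comp (continuous_apply γ)) (continuous_apply l)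
  have hD_nonempty : ∀ γ, (D γ).Nonempty := fun γ => by
    obtain ⟨δ, hγδ, hmδ⟩ := directed_of (· ≤ ·) γ m
    obtain ⟨v, hv⟩ := hp δ hmδ
    refine ⟨fun l => if h : l ≤ δ then 𝒮.bond h v else (hne l).some, ?_, fun l h => ?_⟩
    · simp only [dif_pos hmδ, hv]
    · simp only [dif_pos hγδ, dif_pos (h.trans hγδ), 𝒮.bond_comp]
  have hD_anti : Directed (· ⊇ ·) D := directed_of_isDirected_le fun γ γ' hγ x hx =>
    ⟨hx.1, fun l h => by rw [← hx.2 γ hγ, 𝒮.bond_comp, hx.2]⟩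
  have : Nonempty Λ := ⟨m⟩
  obtain ⟨x, hx⟩ := IsCompact.nonempty_iInter_of_directed_nonempty_isCompact_isClosed D hD_anti
    hD_nonempty (fun γ => (hD_closed γ).isCompact) hD_closed
  rw [mem_iInter] at hx
  exact ⟨⟨x, fun l l' h => (hx l').2 l h⟩, (hx m).1⟩

variable {𝒮} in
lemma ML.exists_range_bond_subset_range_proj [IsDirected Λ (· ≤ ·)] (hML : 𝒮.ML) (m : Λ) :
    ∃ n, ∃ hmn : m ≤ n, range (𝒮.bond hmn) ⊆ range fun x : 𝒮.limitSet => x.1 m := by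
  obtain ⟨n, hmn, hstab⟩ := hML m
  refine ⟨n, hmn, ?_⟩
  rintro _ ⟨w, rfl⟩
  refine 𝒮.mem_range_proj_of_forall_mem_range_bond fun γ hmγ => ?_
  obtain ⟨δ, hγδ, hnδ⟩ := directed_of (· ≤ ·) γ n
  obtain ⟨v, hv⟩ := (hstab δ hnδ).symm ▸ mem_range_self (f := 𝒮.bond hmn) w
  exact ⟨𝒮.bond hγδ v, by rw [𝒮.bond_comp, ← hv]⟩

theorem shadowingProperty_limitDyn [IsDirected Λ (· ≤ ·)] (hML : 𝒮.ML) {S : Set G}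
    (hterms : ∀ l, ShadowingProperty (𝒮.termDyn l) S) : ShadowingProperty 𝒮.limitDyn S := by
  classical
  rcases isEmpty_or_nonempty Λ with hΛ | hΛ
  · have : Subsingleton 𝒮.limitSet := ⟨fun x y => Subtype.ext (funext isEmptyElim)⟩
    exact shadowingProperty_of_subsingleton _ S
  intro 𝒰 h𝒰
  obtain ⟨m, 𝒞, h𝒞, h𝒞𝒰⟩ := 𝒮.exists_isFOC_proj_refines h𝒰
  obtain ⟨n, hmn, hlift⟩ := hML.exists_range_bond_subset_range_proj m
  obtain ⟨𝒱, h𝒱, hshadow⟩ := hterms n _ (h𝒞.preimage (𝒮.bond_cont hmn))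
  refine ⟨_, h𝒱.preimage (𝒮.continuous_proj n), fun x hx => ?_⟩
  obtain ⟨w, hw⟩ := hshadow _ (hx.map (𝒮.isEquivariant_proj n))
  obtain ⟨z, hz⟩ := hlift ⟨w, rfl⟩
  refine ⟨z, fun g => h𝒞𝒰 _ _ ?_⟩
  have hclose := isCoverClose_image_preimage_iff.1 (hw g)
  rwa [𝒮.bond_act, ← hz, Function.comp_apply, (x g).2 m n hmn] at hclose

end SubshiftInvSys

theorem shadowing_of_factor_of_invlim_shadowing_subshifts_general
    {G X : Type} [Group G] [MetricSpace X] [CompactSpace X]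
    (Φ : DynAction G X) (S : Finset G)
    {Λ : Type} [Preorder Λ] [IsDirected Λ (· ≤ ·)]
    (𝒮 : SubshiftInvSys G Λ) (hML : 𝒮.ML)
    (hterms : ∀ l : Λ, ShadowingProperty (𝒮.termDyn l) (S : Set G))
    (f : ↥𝒮.limitSet → X) (hf : IsFactorMap 𝒮.limitDyn Φ f)
    (halmost : AlmostLiftsPseudoOrbits 𝒮.limitDyn Φ f (S : Set G)) :
    ShadowingProperty Φ (S : Set G) :=
  (𝒮.shadowingProperty_limitDyn hML hterms).of_almostLiftsPseudoOrbits hf.1 hf.2.2 halmost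

/-- **Corollary 5.6.** If `(X,G,Φ)` (with `X` compact metric) is a factor of the inverse
limit of an ML inverse system of subshifts with the `S`-shadowing property, by a factor
map which almost lifts pseudo-orbits for `S`, then `Φ` has the `S`-shadowing property. -/
theorem shadowing_of_factor_of_invlim_shadowing_subshifts
    {G X : Type} [Group G] [Countable G] [MetricSpace X] [CompactSpace X]
    (Φ : DynAction G X) (S : Finset G)
    {Λ : Type} [Preorder Λ] [IsDirected Λ (· ≤ ·)]
    (𝒮 : SubshiftInvSys G Λ) (hML : 𝒮.ML)
    (hterms : ∀ l : Λ, ShadowingProperty (𝒮.termDyn l) (S : Set G))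
    (f : ↥𝒮.limitSet → X) (hf : IsFactorMap 𝒮.limitDyn Φ f)
    (halmost : AlmostLiftsPseudoOrbits 𝒮.limitDyn Φ f (S : Set G)) :
    ShadowingProperty Φ (S : Set G) :=
  shadowing_of_factor_of_invlim_shadowing_subshifts_general Φ S 𝒮 hML hterms f hf halmost
end

section
/- Let (X, G, Φ) be a dynamical system, 𝒰 a finite open cover of X, and A a finite subset of G. Then for any P_A, P'_A ∈ ℒ_A(𝒪(𝒰)), one has N(U, V) \ (A⁻¹A) ⊆ N(C(P_A) ∩ 𝒪(𝒰), C(P'_A) ∩ 𝒪(𝒰)) ⊆ N(U, V), where U = ∩_{g∈A} Φ_{g⁻¹}(P_A(g)), V = ∩_{g∈A} Φ_{g⁻¹}(P'_A(g)), and A⁻¹A = {a⁻¹a' : a, a' ∈ A}. -/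
open Set

universe u

/-! ### Orbit spaces and pseudo-orbit spaces of finite covers -/

/-- An element of the finite cover `𝒰`, regarded as a letter of a (discrete) finite
alphabet. -/
structure CoverElt {X : Type u} (𝒰 : Finset (Set X)) where
  val : Set X
  mem : val ∈ 𝒰

instance {X : Type u} (𝒰 : Finset (Set X)) : TopologicalSpace (CoverElt 𝒰) := ⊥
instance {X : Type u} (𝒰 : Finset (Set X)) : DiscreteTopology (CoverElt 𝒰) := ⟨rfl⟩
instance {X : Type u} (𝒰 : Finset (Set X)) : Finite (CoverElt 𝒰) :=
  Finite.of_injective (fun e => (⟨e.val, e.mem⟩ : {U : Set X // U ∈ 𝒰}))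
    (fun a b hab => by cases a; cases b; simpa using hab)

/-- The `𝒰`-orbit space `𝒪(𝒰)`: the closure in the full shift `𝒰^G` of the set of
orbit patterns. -/
def orbitSpace {G X : Type u} [Group G] [TopologicalSpace X]
    (Φ : DynAction G X) (𝒰 : Finset (Set X)) : Set (G → CoverElt 𝒰) :=
  closure {u : G → CoverElt 𝒰 | (⋂ g : G, Φ.act g⁻¹ '' (u g).val).Nonempty}

/-- The `(S,𝒰)`-pseudo-orbit space `𝒫𝒪_S(𝒰)`: all patterns of `(S,𝒰)`-pseudo-orbits. -/
def psOrbitSpace {G X : Type u} [Group G] [TopologicalSpace X]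
    (Φ : DynAction G X) (S : Set G) (𝒰 : Finset (Set X)) : Set (G → CoverElt 𝒰) :=
  {u : G → CoverElt 𝒰 | ∃ x : G → X, IsPseudoOrbitPattern Φ S 𝒰 x (fun g => (u g).val)}

/-!
A point of `⋂_{g∈B} Φ_{g⁻¹}(P g)` whose `h`-translate lies in `⋂_{g∈B} Φ_{g⁻¹}(P' g)` gives an
orbit pattern that is `P` on `B` and `P'` on `B h`; when `h ∉ B⁻¹B` these shapes are disjoint, so
the pattern can be glued from `P`, `P'` and any cover elements containing the rest of the orbit.
Conversely, a point of `𝒪(𝒰)` agrees on the finite set `B ∪ B h` with an orbit pattern, whose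
base point then witnesses `h ∈ N(U, V)`.
-/

namespace DynAction

variable {G X : Type u} [Group G] [TopologicalSpace X] (Φ : DynAction G X)

theorem act_inv_act (g : G) (x : X) : Φ.act g⁻¹ (Φ.act g x) = x := by
  rw [← Φ.act_mul, inv_mul_cancel, Φ.act_one]

theorem act_act_inv (g : G) (x : X) : Φ.act g (Φ.act g⁻¹ x) = x := by
  rw [← Φ.act_mul, mul_inv_cancel, Φ.act_one]

theorem mem_act_inv_image {g : G} {S : Set X} {x : X} :
    x ∈ Φ.act g⁻¹ '' S ↔ Φ.act g x ∈ S :=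
  ⟨by rintro ⟨s, hs, rfl⟩; rwa [Φ.act_act_inv], fun h => ⟨_, h, Φ.act_inv_act g x⟩⟩

end DynAction

theorem mem_hittingTimes {G X : Type u} [Group G] [TopologicalSpace X] {Φ : DynAction G X}
    {U V : Set X} {h : G} :
    h ∈ hittingTimes Φ U V ↔ h ≠ 1 ∧ ∃ x ∈ U, Φ.act h x ∈ V := by
  simp only [hittingTimes, mem_ofPred_eq, Set.Nonempty, mem_inter_iff, Φ.mem_act_inv_image]

theorem exists_eqOn_of_mem_closure {G A : Type*} [TopologicalSpace A] [DiscreteTopology A]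
    {S : Set (G → A)} {u : G → A} (hu : u ∈ closure S) {F : Set G} (hF : F.Finite) :
    ∃ w ∈ S, EqOn w u F := by
  obtain ⟨w, hwu, hwS⟩ := mem_closure_iff.1 hu (F.pi fun g => {u g})
    (isOpen_set_pi hF fun _ _ => isOpen_discrete _) fun _ _ => rfl
  exact ⟨w, hwS, hwu⟩

namespace orbitSpace

variable {G X : Type u} [Group G] [TopologicalSpace X] {Φ : DynAction G X}
  {𝒰 : Finset (Set X)}

theorem mem_of_forall_act_mem {u : G → CoverElt 𝒰} {x : X}
    (hx : ∀ g, Φ.act g x ∈ (u g).val) : u ∈ orbitSpace Φ 𝒰 :=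
  subset_closure ⟨x, mem_iInter.2 fun g => Φ.mem_act_inv_image.2 (hx g)⟩

theorem forall_act_mem_shift {u : G → CoverElt 𝒰} {x : X}
    (hx : ∀ g, Φ.act g x ∈ (u g).val) (h : G) (g : G) :
    Φ.act g (Φ.act h x) ∈ (shift G (CoverElt 𝒰) h u g).val := by
  rw [← Φ.act_mul]
  exact hx (g * h)

theorem exists_forall_act_mem {u : G → CoverElt 𝒰} (hu : u ∈ orbitSpace Φ 𝒰) {F : Set G}
    (hF : F.Finite) : ∃ z : X, ∀ g ∈ F, Φ.act g z ∈ (u g).val := by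
  obtain ⟨w, ⟨z, hz⟩, hwu⟩ := exists_eqOn_of_mem_closure hu hF
  exact ⟨z, fun g hg => hwu hg ▸ Φ.mem_act_inv_image.1 (mem_iInter.1 hz g)⟩

theorem exists_forall_act_mem_eqOn (h𝒰 : ⋃₀ (𝒰 : Set (Set X)) = univ) {x : X} {F : Set G}
    {Q : G → CoverElt 𝒰} (hQ : ∀ g ∈ F, Φ.act g x ∈ (Q g).val) :
    ∃ u : G → CoverElt 𝒰, EqOn u Q F ∧ ∀ g, Φ.act g x ∈ (u g).val := by
  classical
  have hcover (y : X) : ∃ e : CoverElt 𝒰, y ∈ e.val := by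
    obtain ⟨U, hU, hyU⟩ := mem_sUnion.1 (h𝒰 ▸ mem_univ y)
    exact ⟨⟨U, hU⟩, hyU⟩
  choose pick hpick using hcover
  refine ⟨F.piecewise Q fun g => pick (Φ.act g x), fun g hg => F.piecewise_eq_of_mem _ _ hg,
    fun g => ?_⟩
  by_cases hg : g ∈ F
  · rw [F.piecewise_eq_of_mem _ _ hg]
    exact hQ g hg
  · rw [F.piecewise_eq_of_notMem _ _ hg]
    exact hpick _

theorem exists_forall_act_mem_cylinder_shift_cylinder (h𝒰 : ⋃₀ (𝒰 : Set (Set X)) = univ)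
    {x : X} {h : G} {B : Finset G} {P P' : G → CoverElt 𝒰}
    (hBh : ∀ a ∈ B, ∀ a' ∈ B, h ≠ a⁻¹ * a')
    (hxP : ∀ g ∈ B, Φ.act g x ∈ (P g).val) (hxP' : ∀ g ∈ B, Φ.act g (Φ.act h x) ∈ (P' g).val) :
    ∃ u : G → CoverElt 𝒰, u ∈ cylinder B P ∧ shift G (CoverElt 𝒰) h u ∈ cylinder B P' ∧
      ∀ g, Φ.act g x ∈ (u g).val := by
  classical
  set Q : G → CoverElt 𝒰 := fun g => if g ∈ B then P g else P' (g * h⁻¹)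
  have hQP' : ∀ b ∈ B, Q (b * h) = P' b := fun b hb => by
    have hbh : b * h ∉ B := fun hbh => hBh b hb _ hbh (by group)
    simp [Q, hbh]
  have hxQ : ∀ g ∈ (↑B ∪ (· * h) '' ↑B : Set G), Φ.act g x ∈ (Q g).val := by
    rintro g (hg | ⟨b, hb, rfl⟩)
    · rw [show Q g = P g from if_pos hg]
      exact hxP g hg
    · rw [hQP' b hb, Φ.act_mul]
      exact hxP' b hb
  obtain ⟨u, huQ, hux⟩ := exists_forall_act_mem_eqOn h𝒰 hxQ
  refine ⟨u, fun b hb => ?_, fun b hb => ?_, hux⟩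
  · rw [huQ (Or.inl hb)]
    simp [Q, hb]
  · rw [shift, huQ (Or.inr ⟨b, hb, rfl⟩), hQP' b hb]

end orbitSpace

theorem hittingTimes_cylinders_orbitSpace_general
    {G X : Type} [Group G] [TopologicalSpace X]
    (Φ : DynAction G X) (𝒰 : Finset (Set X)) (h𝒰 : IsFOC 𝒰) (B : Finset G)
    (P P' : G → CoverElt 𝒰) :
    hittingTimes Φ (⋂ g ∈ B, Φ.act g⁻¹ '' (P g).val) (⋂ g ∈ B, Φ.act g⁻¹ '' (P' g).val)
        \ {g : G | ∃ a ∈ B, ∃ a' ∈ B, g = a⁻¹ * a'} ⊆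
      hittingTimes (shiftDyn G (CoverElt 𝒰))
        (cylinder B P ∩ orbitSpace Φ 𝒰) (cylinder B P' ∩ orbitSpace Φ 𝒰) ∧
    hittingTimes (shiftDyn G (CoverElt 𝒰))
        (cylinder B P ∩ orbitSpace Φ 𝒰) (cylinder B P' ∩ orbitSpace Φ 𝒰) ⊆
      hittingTimes Φ (⋂ g ∈ B, Φ.act g⁻¹ '' (P g).val)
        (⋂ g ∈ B, Φ.act g⁻¹ '' (P' g).val) := by
  constructor
  · rintro h ⟨hNUV, hBB⟩
    obtain ⟨hne, x, hxU, hxV⟩ := mem_hittingTimes.1 hNUV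
    simp only [mem_iInter₂, Φ.mem_act_inv_image] at hxU hxV
    obtain ⟨u, huP, huP', hux⟩ :=
      orbitSpace.exists_forall_act_mem_cylinder_shift_cylinder h𝒰.2
      (fun a ha a' ha' e => hBB ⟨a, ha, a', ha', e⟩) hxU hxV
    exact mem_hittingTimes.2 ⟨hne, u, ⟨huP, orbitSpace.mem_of_forall_act_mem hux⟩, huP',
      orbitSpace.mem_of_forall_act_mem (orbitSpace.forall_act_mem_shift hux h)⟩
  · rintro h hN
    obtain ⟨hne, u, ⟨huP, huO⟩, huP', -⟩ := mem_hittingTimes.1 hN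
    obtain ⟨z, hz⟩ :=
      orbitSpace.exists_forall_act_mem huO (B.finite_toSet.union (B.finite_toSet.image (· * h)))
    refine mem_hittingTimes.2 ⟨hne, z, ?_, ?_⟩ <;> simp only [mem_iInter₂, Φ.mem_act_inv_image]
    · intro b hb
      rw [← huP b hb]
      exact hz b (Or.inl hb)
    · intro b hb
      rw [← Φ.act_mul, ← huP' b hb]
      exact hz _ (Or.inr ⟨b, hb, rfl⟩)

/-- **Lemma 6.3.** Hitting times between cylinder sets of the orbit space are squeezed
between `N(U,V) \ A⁻¹A` and `N(U,V)`. -/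
theorem hittingTimes_cylinders_orbitSpace
    {G X : Type} [Group G] [Countable G] [TopologicalSpace X]
    [CompactSpace X] [T2Space X]
    (Φ : DynAction G X) (𝒰 : Finset (Set X)) (h𝒰 : IsFOC 𝒰) (B : Finset G)
    (P P' : G → CoverElt 𝒰)
    (hP : P ∈ language B (orbitSpace Φ 𝒰)) (hP' : P' ∈ language B (orbitSpace Φ 𝒰)) :
    hittingTimes Φ (⋂ g ∈ B, Φ.act g⁻¹ '' (P g).val) (⋂ g ∈ B, Φ.act g⁻¹ '' (P' g).val)
        \ {g : G | ∃ a ∈ B, ∃ a' ∈ B, g = a⁻¹ * a'} ⊆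
      hittingTimes (shiftDyn G (CoverElt 𝒰))
        (cylinder B P ∩ orbitSpace Φ 𝒰) (cylinder B P' ∩ orbitSpace Φ 𝒰) ∧
    hittingTimes (shiftDyn G (CoverElt 𝒰))
        (cylinder B P ∩ orbitSpace Φ 𝒰) (cylinder B P' ∩ orbitSpace Φ 𝒰) ⊆
      hittingTimes Φ (⋂ g ∈ B, Φ.act g⁻¹ '' (P g).val)
        (⋂ g ∈ B, Φ.act g⁻¹ '' (P' g).val) :=
  hittingTimes_cylinders_orbitSpace_general Φ 𝒰 h𝒰 B P P'
end
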